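/- Let m ≥ 2 be odd, n ≥ 1, w the chain pomset weight on (ZMod m)^n, and C = {v : v_i = 0 for i ≤ n-k}. Then the number of codewords of C of weight exactly i is: 1 for i = 0; 0 for 1 ≤ i ≤ (n-k)⌊m/2⌋; and for i = t⌊m/2⌋ + j with t ≥ n-k and 1 ≤ j ≤ ⌊m/2⌋, it equals ((2j+1) - (2j-1))·m^{t-(n-k)} = 2·m^{t-(n-k)} when j < ⌊m/2⌋, and (m - (2⌊m/2⌋-1))·m^{t-(n-k)} = 2·m^{t-(n-k)} when j = ⌊m/2⌋ (since m odd gives m - (m-2) = 2). -/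

import Mathlib

/-- The Lee weight on `ZMod m`. -/
def leeWeight (m : ℕ) (x : ZMod m) : ℕ := min x.val (m - x.val)

/-- The chain (NRT-type) pomset weight on `(ZMod m)^n`: the Lee weight of the
top nonzero coordinate plus `⌊m/2⌋` for each coordinate below it. -/
noncomputable def chainWeight (m n : ℕ) (v : Fin n → ZMod m) : ℕ :=
  if h : v = 0 then 0
  else
    let t : Fin n := (Finset.univ.filter fun i => v i ≠ 0).max' (by
      rw [Finset.filter_nonempty_iff]
      obtain ⟨i, hi⟩ := Function.ne_iff.mp h
      exact ⟨i, Finset.mem_univ i, by simpa using hi⟩)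
    leeWeight m (v t) + t.val * (m / 2)

/-!
For `v ≠ 0` with top nonzero coordinate `t`, the weight `leeWeight (v t) + t * ⌊m/2⌋` has its
first summand in `[1, ⌊m/2⌋]`, so the weight determines both `t` and the Lee weight of `v t`.
Hence the codewords of weight `t * ⌊m/2⌋ + j` form a box: coordinates below `n - k` and above
`t` vanish, those in between are free, and `v t` is one of the two elements `±j` of Lee weight
`j` (distinct since `m` is odd). This gives `2 * m ^ (t - (n - k))`, and the same bound shows
that nonzero codewords have weight larger than `(n - k) * ⌊m/2⌋`.
-/

open Finset

section LeeWeight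

variable {m : ℕ}

lemma leeWeight_eq_zero_iff [NeZero m] (x : ZMod m) : leeWeight m x = 0 ↔ x = 0 := by
  have := ZMod.val_lt x
  rw [← ZMod.val_eq_zero, leeWeight]
  omega

lemma leeWeight_le_half (x : ZMod m) : leeWeight m x ≤ m / 2 := by
  unfold leeWeight
  omega

lemma one_le_leeWeight [NeZero m] {x : ZMod m} (hx : x ≠ 0) : 1 ≤ leeWeight m x := by
  have := (leeWeight_eq_zero_iff x).not.mpr hx
  omega

lemma leeWeight_fiber [NeZero m] {j : ℕ} (hj₁ : 1 ≤ j) (hj₂ : j ≤ m / 2) :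
    {x : ZMod m | leeWeight m x = j} = {(j : ZMod m), ((m - j : ℕ) : ZMod m)} := by
  ext x
  have := ZMod.val_lt x
  simp only [Set.mem_ofPred_eq, Set.mem_insert_iff, Set.mem_singleton_iff,
    ← (ZMod.val_injective m).eq_iff, ZMod.val_cast_of_lt (show j < m by omega),
    ZMod.val_cast_of_lt (show m - j < m by omega), leeWeight]
  omega

lemma card_leeWeight_fiber (hm : Odd m) {j : ℕ} (hj₁ : 1 ≤ j) (hj₂ : j ≤ m / 2) :
    Nat.card {x : ZMod m | leeWeight m x = j} = 2 := by
  have : NeZero m := ⟨hm.pos.ne'⟩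
  rw [leeWeight_fiber hj₁ hj₂, Nat.card_coe_set_eq, Set.ncard_pair]
  intro h
  have hval := congrArg ZMod.val h
  rw [ZMod.val_cast_of_lt (by omega), ZMod.val_cast_of_lt (by omega)] at hval
  have := Nat.odd_iff.mp hm
  omega

end LeeWeight

lemma Nat.eq_and_eq_of_add_mul_eq {q a b s t : ℕ} (ha₁ : 1 ≤ a) (ha₂ : a ≤ q) (hb₁ : 1 ≤ b)
    (hb₂ : b ≤ q) (h : a + s * q = b + t * q) : s = t ∧ a = b := by
  have hst : s * q < (t + 1) * q := by rw [add_one_mul]; omega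
  have hts : t * q < (s + 1) * q := by rw [add_one_mul]; omega
  have := Nat.lt_of_mul_lt_mul_right hst
  have := Nat.lt_of_mul_lt_mul_right hts
  obtain rfl : s = t := by omega
  omega

section ChainWeight

variable {m n : ℕ}

lemma exists_top_ne_zero {M : Type*} [Zero M] {v : Fin n → M} (hv : v ≠ 0) :
    ∃ t, v t ≠ 0 ∧ ∀ i, t < i → v i = 0 := by
  classical
  obtain ⟨i, hi⟩ := Function.ne_iff.mp hv
  obtain ⟨t, ht, hmax⟩ := (univ.filter fun i => v i ≠ 0).exists_max_image id ⟨i, by simpa using hi⟩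
  refine ⟨t, (mem_filter.mp ht).2, fun i hti => ?_⟩
  by_contra hvi
  exact (hmax i (by simpa using hvi)).not_gt hti

lemma chainWeight_zero : chainWeight m n 0 = 0 := dif_pos rfl

lemma chainWeight_eq_of_top {v : Fin n → ZMod m} (t : Fin n) (hvt : v t ≠ 0)
    (htop : ∀ i, t < i → v i = 0) :
    chainWeight m n v = leeWeight m (v t) + t * (m / 2) := by
  have hv : v ≠ 0 := fun h => hvt (by simp [h])
  have hmax : (univ.filter fun i => v i ≠ 0).max' ⟨t, by simpa using hvt⟩ = t := by
    refine (max'_eq_iff _ _ _).mpr ⟨by simpa using hvt, fun i hi => not_lt.mp fun hti => ?_⟩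
    exact (mem_filter.mp hi).2 (htop i hti)
  rw [chainWeight, dif_neg hv]
  exact congrArg (fun i => leeWeight m (v i) + i * (m / 2)) hmax

lemma lt_chainWeight [NeZero m] {v : Fin n → ZMod m} (hv : v ≠ 0) {s : ℕ}
    (hs : ∀ i : Fin n, (i : ℕ) < s → v i = 0) : s * (m / 2) < chainWeight m n v := by
  obtain ⟨t, hvt, htop⟩ := exists_top_ne_zero hv
  have hst : s ≤ t := not_lt.mp fun h => hvt (hs t h)
  rw [chainWeight_eq_of_top t hvt htop]
  have := one_le_leeWeight hvt
  have := Nat.mul_le_mul_right (m / 2) hst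
  omega

lemma chainWeight_eq_zero_iff [NeZero m] {v : Fin n → ZMod m} : chainWeight m n v = 0 ↔ v = 0 := by
  refine ⟨fun h => by_contra fun hv => ?_, fun h => h ▸ chainWeight_zero⟩
  have := lt_chainWeight (s := 0) hv (by simp)
  omega

lemma chainWeight_eq_iff [NeZero m] {v : Fin n → ZMod m} (t : Fin n) {j : ℕ} (hj₁ : 1 ≤ j)
    (hj₂ : j ≤ m / 2) :
    chainWeight m n v = t * (m / 2) + j ↔ leeWeight m (v t) = j ∧ ∀ i, t < i → v i = 0 := by
  constructor
  · intro hw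
    have hv : v ≠ 0 := chainWeight_eq_zero_iff.not.mp (by omega)
    obtain ⟨t', hvt', htop'⟩ := exists_top_ne_zero hv
    rw [chainWeight_eq_of_top t' hvt' htop'] at hw
    obtain ⟨htt', hj⟩ := Nat.eq_and_eq_of_add_mul_eq (one_le_leeWeight hvt') (leeWeight_le_half _)
      hj₁ hj₂ (hw.trans (add_comm _ _))
    obtain rfl : t' = t := Fin.ext htt'
    exact ⟨hj, htop'⟩
  · rintro ⟨hj, htop⟩
    have hvt : v t ≠ 0 := fun h => by
      rw [h, (leeWeight_eq_zero_iff _).mpr rfl] at hj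
      omega
    rw [chainWeight_eq_of_top t hvt htop, hj, add_comm]

end ChainWeight

lemma Nat.card_setOf_forall_mem {ι : Type*} [Fintype ι] {β : ι → Type*} (S : ∀ i, Set (β i)) :
    Nat.card {v : ∀ i, β i | ∀ i, v i ∈ S i} = ∏ i, Nat.card (S i) :=
  (Nat.card_congr (Equiv.subtypePiEquivPi)).trans Nat.card_pi

lemma prod_range_ite_eq_mul_pow {n : ℕ} (a b c t : ℕ) (htn : t < n) :
    ∏ i ∈ range n, (if i = t then a else if c ≤ i ∧ i < t then b else 1) = a * b ^ (t - c) := by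
  have split : ∀ i, (if i = t then a else if c ≤ i ∧ i < t then b else 1) =
      (if i = t then a else 1) * (if i ∈ Ico c t then b else 1) := by
    intro i
    by_cases hit : i = t <;> simp [hit]
  have hsub : Ico c t ⊆ range n := fun i hi => by simp at hi ⊢; omega
  rw [prod_congr rfl fun i _ => split i, prod_mul_distrib, prod_ite_eq', if_pos (mem_range.mpr htn),
    prod_ite_mem, inter_eq_right.mpr hsub, prod_const, Nat.card_Ico]

lemma card_chainWeight_eq_of_vanish_below {m n : ℕ} (hm : Odd m) {s t j : ℕ} (hst : s ≤ t)
    (htn : t < n) (hj₁ : 1 ≤ j) (hj₂ : j ≤ m / 2) :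
    Nat.card {v : Fin n → ZMod m |
      (∀ i : Fin n, (i : ℕ) < s → v i = 0) ∧ chainWeight m n v = t * (m / 2) + j} =
      2 * m ^ (t - s) := by
  have : NeZero m := ⟨hm.pos.ne'⟩
  let box (i : Fin n) : Set (ZMod m) :=
    if (i : ℕ) = t then {x | leeWeight m x = j} else if s ≤ i ∧ i < t then Set.univ else {0}
  have hbox : {v : Fin n → ZMod m |
      (∀ i : Fin n, (i : ℕ) < s → v i = 0) ∧ chainWeight m n v = t * (m / 2) + j} =
      {v | ∀ i, v i ∈ box i} := by
    ext v
    rw [Set.mem_ofPred_eq, Set.mem_ofPred_eq, show t = ((⟨t, htn⟩ : Fin n) : ℕ) from rfl,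
      chainWeight_eq_iff _ hj₁ hj₂]
    constructor
    · rintro ⟨hlow, hj, hhigh⟩ i
      unfold box
      split_ifs with hit hmid
      · rwa [show i = ⟨t, htn⟩ from Fin.ext hit]
      · trivial
      · rcases lt_or_gt_of_ne hit with hlt | hgt
        · exact hlow i (by omega)
        · exact hhigh i hgt
    · intro hv
      refine ⟨fun i hi => ?_, ?_, fun i hi => ?_⟩
      · simpa [box, show (i : ℕ) ≠ t by omega, show ¬s ≤ i by omega] using hv i
      · simpa [box] using hv ⟨t, htn⟩
      · have hti : t < (i : ℕ) := hi
        simpa [box, show (i : ℕ) ≠ t by omega, show ¬(i : ℕ) < t by omega] using hv i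
  have hcard (i : Fin n) : Nat.card (box i) =
      if (i : ℕ) = t then 2 else if s ≤ i ∧ i < t then m else 1 := by
    unfold box
    split_ifs
    · exact card_leeWeight_fiber hm hj₁ hj₂
    · rw [Nat.card_univ, Nat.card_zmod]
    · exact Nat.card_unique
  rw [hbox, Nat.card_setOf_forall_mem, prod_congr rfl fun i _ => hcard i,
    Fin.prod_univ_eq_prod_range (fun i => if i = t then 2 else if s ≤ i ∧ i < t then m else 1),
    prod_range_ite_eq_mul_pow _ _ _ _ htn]

theorem chain_mds_weight_distribution_general (m n k : ℕ) (hmodd : Odd m) :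
    letI C : Set (Fin n → ZMod m) := {v | ∀ i : Fin n, (i : ℕ) < n - k → v i = 0}
    (Nat.card {v : Fin n → ZMod m | v ∈ C ∧ chainWeight m n v = 0} = 1) ∧
      (∀ i : ℕ, 1 ≤ i → i ≤ (n - k) * (m / 2) →
        Nat.card {v : Fin n → ZMod m | v ∈ C ∧ chainWeight m n v = i} = 0) ∧
      (∀ t j : ℕ, n - k ≤ t → t < n → 1 ≤ j → j ≤ m / 2 →
        Nat.card {v : Fin n → ZMod m | v ∈ C ∧ chainWeight m n v = t * (m / 2) + j} =
          2 * m ^ (t - (n - k))) := by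
  have : NeZero m := ⟨hmodd.pos.ne'⟩
  refine ⟨?_, fun i hi₁ hi₂ => ?_, fun t j hkt htn hj₁ hj₂ =>
    card_chainWeight_eq_of_vanish_below hmodd hkt htn hj₁ hj₂⟩
  · refine Nat.card_eq_one_iff_exists.mpr ⟨⟨0, fun _ _ => rfl, chainWeight_zero⟩, ?_⟩
    exact fun ⟨v, _, hw⟩ => Subtype.ext (chainWeight_eq_zero_iff.mp hw)
  · refine Nat.card_eq_zero.mpr (Or.inl ⟨fun ⟨v, hC, hw⟩ => ?_⟩)
    have hv : v ≠ 0 := chainWeight_eq_zero_iff.not.mp (by omega)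
    have := lt_chainWeight hv hC
    omega

theorem chain_mds_weight_distribution (m n k : ℕ) (hm : 2 ≤ m) (hmodd : Odd m)
    (hn : 1 ≤ n) (hk : k ≤ n) :
    letI C : Set (Fin n → ZMod m) := {v | ∀ i : Fin n, (i : ℕ) < n - k → v i = 0}
    (Nat.card {v : Fin n → ZMod m | v ∈ C ∧ chainWeight m n v = 0} = 1) ∧
      (∀ i : ℕ, 1 ≤ i → i ≤ (n - k) * (m / 2) →
        Nat.card {v : Fin n → ZMod m | v ∈ C ∧ chainWeight m n v = i} = 0) ∧
      (∀ t j : ℕ, n - k ≤ t → t < n → 1 ≤ j → j ≤ m / 2 →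
        Nat.card {v : Fin n → ZMod m | v ∈ C ∧ chainWeight m n v = t * (m / 2) + j} =
          2 * m ^ (t - (n - k))) :=
  chain_mds_weight_distribution_general m n k hmodd
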